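/- A partition λ with exactly k parts is (k,k)-legal (i.e., the non-skew Schur polynomial S_λ arises as a k×k minor of A_k) if and only if λ_1 ≤ n-k+1 and λ_k ≥ k. -/

import Mathlib

open Matrix

/-- Formal algebraically independent variables `h_1, …, h_n`, with `h_0 = 1` and
`h_d = 0` for `d < 0` or `d > n`. -/
noncomputable def Hf (n : ℕ) (d : ℤ) : MvPolynomial ℕ ℤ :=
  if d = 0 then 1 else if 1 ≤ d ∧ d ≤ (n : ℤ) then MvPolynomial.X d.toNat else 0

/-- The `n × n` lower triangular Toeplitz matrix `T(i,j) = h_{n-i+j}` (1-indexed, `i ≥ j`). -/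
noncomputable def ToepH (n : ℕ) : Matrix (Fin n) (Fin n) (MvPolynomial ℕ ℤ) :=
  Matrix.of fun i j =>
    if (j : ℕ) ≤ (i : ℕ) then Hf n ((n : ℤ) - ((i : ℕ) + 1) + ((j : ℕ) + 1)) else 0

/-- The `(n-c+1) × c` submatrix `A_c` on columns `1,…,c` and rows `c,…,n`. -/
noncomputable def AcH (n c : ℕ) (hc1 : 1 ≤ c) (hcn : c ≤ n) :
    Matrix (Fin (n - c + 1)) (Fin c) (MvPolynomial ℕ ℤ) :=
  (ToepH n).submatrix
    (fun i => ⟨c - 1 + (i : ℕ), by have := i.isLt; omega⟩)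
    (fun j => ⟨(j : ℕ), by have := j.isLt; omega⟩)

/-- The skew Schur polynomial `S_{λ/μ} = det(h_{λ_i - μ_j - i + j})` (Jacobi–Trudi),
for `λ, μ` with `k` rows (0-indexed here, which gives the same determinant). -/
noncomputable def skewSchur (n k : ℕ) (lam mu : Fin k → ℕ) : MvPolynomial ℕ ℤ :=
  (Matrix.of fun i j : Fin k =>
    Hf n ((lam i : ℤ) - (mu j : ℤ) - ((i : ℕ) + 1) + ((j : ℕ) + 1))).det

/-- `λ/μ` is `(k,c)`-legal: `S_{λ/μ}` equals some `k × k` minor of `A_c`. -/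
def IsLegal (n k c : ℕ) (hc1 : 1 ≤ c) (hcn : c ≤ n) (lam mu : Fin k → ℕ) : Prop :=
  ∃ (f : Fin k → Fin (n - c + 1)) (g : Fin k → Fin c),
    StrictMono f ∧ StrictMono g ∧
    skewSchur n k lam mu = ((AcH n c hc1 hcn).submatrix f g).det


/-!
Both `S_λ` and every `k × k` minor of `A_k` are determinants `det (h_{b_i + j})`; a minor must
use all `k` columns, and the minor on rows `r_1 < ⋯ < r_k` has `b_i = n - k + 1 - r_i`, so its
diagonal indices `b_i + i` lie in `[k, n - k + 1]`. For strictly decreasing `b` the diagonal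
monomial `∏ h_{b_i + i}` has coefficient one, since by the rearrangement inequality no other
permutation yields the same multiset of indices. Hence if `S_λ = det (h_{λ_i - i + j})` equals such
a minor, this monomial is a term `∏ h_{λ_{σ i} - σ i + i}` of `S_λ`, so every `λ_m - m + i` with
`i = σ⁻¹ m` lies in `[k, n - k + 1]`; taking `m = 1` and `m = k` gives the two bounds. Conversely,
under the bounds the rows `r_i = n - k + 1 - (λ_i - i)` give `S_λ`.
-/

open MvPolynomial Finsupp

lemma Hf_of_pos {n : ℕ} {d : ℤ} (h1 : 1 ≤ d) (hn : d ≤ n) : Hf n d = X d.toNat := by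
  rw [Hf, if_neg (by omega), if_pos ⟨h1, hn⟩]

lemma totalDegree_Hf_le (n : ℕ) (d : ℤ) :
    (Hf n d).totalDegree ≤ if 1 ≤ d ∧ d ≤ n then 1 else 0 := by
  unfold Hf
  split_ifs <;> simp_all [totalDegree_X]

/-- The exponent of `∏ i, h_{p i}`; meaningful only when every `p i ≥ 1`, because of `toNat`. -/
noncomputable def hExponent {ι : Type*} [Fintype ι] (p : ι → ℤ) : ℕ →₀ ℕ :=
  ∑ i, single (p i).toNat 1

lemma prod_Hf_eq_monomial {ι : Type*} [Fintype ι] {n : ℕ} {v : ι → ℤ}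
    (hv : ∀ i, 1 ≤ v i ∧ v i ≤ n) : ∏ i, Hf n (v i) = monomial (hExponent v) 1 := by
  simp only [hExponent, monomial_sum_one, Hf_of_pos (hv _).1 (hv _).2, X]

lemma sum_hExponent {ι : Type*} [Fintype ι] (p : ι → ℤ) :
    ((hExponent p).sum fun _ e => e) = Fintype.card ι := by
  rw [hExponent, ← Finsupp.sum_finsetSum_index (fun _ => rfl) (fun _ _ _ => rfl)]
  simp

/-- A monomial of degree `#ι` can only come from a product of `#ι` factors `h_d` with `d ≥ 1`. -/
lemma hExponent_eq_of_coeff_prod_Hf_ne_zero {ι : Type*} [Fintype ι] {n : ℕ} {v p : ι → ℤ}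
    (h : coeff (hExponent p) (∏ i, Hf n (v i)) ≠ 0) :
    (∀ i, 1 ≤ v i ∧ v i ≤ n) ∧ hExponent v = hExponent p := by
  have hv : ∀ i, 1 ≤ v i ∧ v i ≤ n := by
    by_contra! hbad
    obtain ⟨i₀, hi₀⟩ := hbad
    have hdeg := (le_totalDegree (MvPolynomial.mem_support_iff.2 h)).trans
      (totalDegree_finsetProd _ _)
    rw [sum_hExponent] at hdeg
    have hlt : ∑ i, (Hf n (v i)).totalDegree < ∑ _i : ι, 1 :=
      Finset.sum_lt_sum (fun i _ => (totalDegree_Hf_le n (v i)).trans (by split_ifs <;> simp))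
        ⟨i₀, Finset.mem_univ _, by
          have := totalDegree_Hf_le n (v i₀)
          rw [if_neg (by omega)] at this
          omega⟩
    rw [Finset.sum_const, Finset.card_univ, smul_eq_mul, mul_one] at hlt
    omega
  refine ⟨hv, ?_⟩
  rw [prod_Hf_eq_monomial hv, coeff_monomial] at h
  by_contra hne
  exact h (if_neg hne)

lemma toMultiset_hExponent {ι : Type*} [Fintype ι] (q : ι → ℤ) :
    toMultiset (hExponent q) = Finset.univ.val.map fun i => (q i).toNat := by
  simp only [hExponent, map_sum, toMultiset_single, one_smul]
  rw [← Multiset.sum_map_singleton (Finset.univ.val.map _), Multiset.map_map]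
  rfl

lemma map_univ_val_eq_of_coeff_prod_Hf_ne_zero {ι : Type*} [Fintype ι] {n : ℕ} {v p : ι → ℤ}
    (hp : ∀ i, 1 ≤ p i) (h : coeff (hExponent p) (∏ i, Hf n (v i)) ≠ 0) :
    Finset.univ.val.map v = Finset.univ.val.map p := by
  obtain ⟨hv, hvp⟩ := hExponent_eq_of_coeff_prod_Hf_ne_zero h
  have hcast : ∀ q : ι → ℤ, (∀ i, 0 ≤ q i) →
      Finset.univ.val.map q = (toMultiset (hExponent q)).map ((↑) : ℕ → ℤ) := fun q hq => by
    rw [toMultiset_hExponent, Multiset.map_map]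
    exact Multiset.map_congr rfl fun i _ => (Int.toNat_of_nonneg (hq i)).symm
  rw [hcast v (fun i => by linarith [hv i]), hcast p (fun i => by linarith [hp i]), hvp]

noncomputable def jacobiTrudiDet (n : ℕ) {k : ℕ} (b : Fin k → ℤ) : MvPolynomial ℕ ℤ :=
  (Matrix.of fun i j : Fin k => Hf n (b i + (j : ℕ))).det

lemma exists_perm_of_coeff_jacobiTrudiDet_ne_zero {n k : ℕ} {b p : Fin k → ℤ}
    (hp : ∀ i, 1 ≤ p i) (h : coeff (hExponent p) (jacobiTrudiDet n b) ≠ 0) :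
    ∃ σ : Equiv.Perm (Fin k),
      Finset.univ.val.map (fun i : Fin k => b (σ i) + (i : ℕ)) = Finset.univ.val.map p := by
  rw [jacobiTrudiDet, det_apply, coeff_sum] at h
  obtain ⟨σ, -, hσ⟩ := Finset.exists_ne_zero_of_sum_ne_zero h
  rw [coeff_smul] at hσ
  exact ⟨σ, map_univ_val_eq_of_coeff_prod_Hf_ne_zero hp (right_ne_zero_of_smul hσ)⟩

/-- Comparing `∑ (b (σ i) + i) ^ 2` with `∑ (b i + i) ^ 2` gives `∑ b (σ i) * i = ∑ b i * i`,
the equality case of the rearrangement inequality. -/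
lemma perm_eq_one_of_map_add_eq {k : ℕ} {b : Fin k → ℤ} (hb : StrictAnti b)
    {σ : Equiv.Perm (Fin k)}
    (h : Finset.univ.val.map (fun i : Fin k => b (σ i) + (i : ℕ)) =
      Finset.univ.val.map (fun i : Fin k => b i + (i : ℕ))) : σ = 1 := by
  have hsq := congrArg (fun s => (s.map (· ^ 2)).sum) h
  simp only [Multiset.map_map, Function.comp_def, Finset.sum_map_val, add_sq,
    Finset.sum_add_distrib, Equiv.sum_comp σ (fun i => b i ^ 2)] at hsq
  have hcross : ∑ i, b (σ i) * ((i : ℕ) : ℤ) = ∑ i, b i * ((i : ℕ) : ℤ) := by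
    simp only [mul_assoc, ← Finset.mul_sum] at hsq
    linarith
  have hanti : Antivary b fun i : Fin k => ((i : ℕ) : ℤ) :=
    fun i j (hij : ((i : ℕ) : ℤ) < (j : ℕ)) => (hb (Fin.lt_def.2 (by exact_mod_cast hij))).le
  have hσanti := hanti.sum_comp_perm_mul_eq_sum_mul_iff.1 hcross
  have hmono : Monotone σ := fun i j hij => by
    rcases hij.lt_or_eq with hij | rfl
    · exact hb.le_iff_ge.1 (hσanti (show ((i : ℕ) : ℤ) < (j : ℕ) by exact_mod_cast hij))
    · rfl
  exact Equiv.ext fun i => congrFun (hmono.strictMono_of_injective σ.injective).eq_id i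

lemma coeff_jacobiTrudiDet_diag {n k : ℕ} {b : Fin k → ℤ} (hb : StrictAnti b)
    (hbn : ∀ i : Fin k, 1 ≤ b i + (i : ℕ) ∧ b i + (i : ℕ) ≤ n) :
    coeff (hExponent fun i : Fin k => b i + (i : ℕ)) (jacobiTrudiDet n b) = 1 := by
  rw [jacobiTrudiDet, det_apply, coeff_sum, Finset.sum_eq_single 1]
  · simp [prod_Hf_eq_monomial hbn]
  · intro σ _ hσ
    rw [coeff_smul]
    by_contra hne
    exact hσ (perm_eq_one_of_map_add_eq hb
      (map_univ_val_eq_of_coeff_prod_Hf_ne_zero (fun i => (hbn i).1) (right_ne_zero_of_smul hne)))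
  · simp

lemma exists_add_eq_of_jacobiTrudiDet_eq {n k : ℕ} {b c : Fin k → ℤ} (hc : StrictAnti c)
    (hcn : ∀ i : Fin k, 1 ≤ c i + (i : ℕ) ∧ c i + (i : ℕ) ≤ n)
    (h : jacobiTrudiDet n b = jacobiTrudiDet n c) (m : Fin k) :
    ∃ i j : Fin k, b m + (i : ℕ) = c j + (j : ℕ) := by
  have hcoeff := coeff_jacobiTrudiDet_diag hc hcn
  rw [← h] at hcoeff
  obtain ⟨σ, hσ⟩ := exists_perm_of_coeff_jacobiTrudiDet_ne_zero (fun i => (hcn i).1)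
    (hcoeff ▸ one_ne_zero)
  have hmem : b (σ (σ.symm m)) + (σ.symm m : ℕ) ∈
      Finset.univ.val.map (fun i : Fin k => b (σ i) + (i : ℕ)) :=
    Multiset.mem_map_of_mem _ (Finset.mem_univ_val _)
  rw [hσ, Multiset.mem_map] at hmem
  obtain ⟨j, -, hj⟩ := hmem
  exact ⟨σ.symm m, j, by simpa using hj.symm⟩

lemma skewSchur_zero_eq_jacobiTrudiDet (n : ℕ) {k : ℕ} (lam : Fin k → ℕ) :
    skewSchur n k lam (fun _ => 0) = jacobiTrudiDet n fun i => (lam i : ℤ) - (i : ℕ) := by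
  unfold skewSchur jacobiTrudiDet
  congr 1
  refine Matrix.ext fun i j => ?_
  simp only [of_apply]
  congr 1
  push_cast
  ring

lemma det_submatrix_AcH {n k : ℕ} (hk : 1 ≤ k) (hkn : k ≤ n) (f : Fin k → Fin (n - k + 1))
    {g : Fin k → Fin k} (hg : StrictMono g) :
    ((AcH n k hk hkn).submatrix f g).det =
      jacobiTrudiDet n fun i => (n : ℤ) - k + 1 - (f i : ℕ) := by
  rw [hg.eq_id, jacobiTrudiDet]
  congr 1
  refine Matrix.ext fun i j => ?_
  have := (f i).isLt
  have := j.isLt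
  simp only [AcH, ToepH, submatrix_apply, of_apply, id_eq]
  rw [if_pos (by omega)]
  congr 1
  omega

lemma val_add_le_val_of_strictMono {k m : ℕ} {f : Fin k → Fin m} (hf : StrictMono f)
    {i j : Fin k} (hij : i ≤ j) : (f i : ℕ) + (j - i) ≤ f j := by
  have hcard :=
    Finset.card_le_card_of_injOn (s := Finset.Icc i j) (t := Finset.Icc (f i) (f j)) f
    (fun a ha => by
      rw [Finset.mem_coe, Finset.mem_Icc] at ha ⊢
      exact ⟨hf.monotone ha.1, hf.monotone ha.2⟩)
    hf.injective.injOn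
  rw [Fin.card_Icc, Fin.card_Icc] at hcard
  have : (i : ℕ) ≤ j := hij
  have : (f i : ℕ) ≤ f j := hf.monotone hij
  omega

lemma diag_index_mem_Icc_of_strictMono {n k : ℕ} (hkn : k ≤ n) {f : Fin k → Fin (n - k + 1)}
    (hf : StrictMono f) (j : Fin k) :
    (k : ℤ) ≤ (n : ℤ) - k + 1 - (f j : ℕ) + (j : ℕ) ∧
      (n : ℤ) - k + 1 - (f j : ℕ) + (j : ℕ) ≤ (n : ℤ) - k + 1 := by
  have hj := j.isLt
  have hlow : (j : ℕ) ≤ f j := by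
    have := val_add_le_val_of_strictMono hf (show (⟨0, by omega⟩ : Fin k) ≤ j from Nat.zero_le _)
    simp only [Nat.sub_zero] at this
    omega
  have hhigh : (f j : ℕ) + (k - 1 - j) < n - k + 1 :=
    (val_add_le_val_of_strictMono hf
      (show j ≤ ⟨k - 1, by omega⟩ from Nat.le_sub_one_of_lt hj)).trans_lt (f _).isLt
  omega

/-- A partition `λ` with exactly `k` parts is `(k,k)`-legal (the non-skew Schur
polynomial `S_λ` arises as a `k × k` minor of `A_k`) iff `λ₁ ≤ n-k+1` and `λ_k ≥ k`. -/
theorem stmt7 (n k : ℕ) (hk : 1 ≤ k) (hkn : k ≤ n)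
    (lam : Fin k → ℕ) (hlam : Antitone lam) :
    IsLegal n k k (by omega) hkn lam (fun _ => 0) ↔
      ((lam ⟨0, by omega⟩ : ℤ) ≤ (n : ℤ) - k + 1 ∧
       (k : ℤ) ≤ (lam ⟨k - 1, by omega⟩ : ℤ)) := by
  constructor
  · rintro ⟨f, g, hf, hg, hdet⟩
    rw [skewSchur_zero_eq_jacobiTrudiDet, det_submatrix_AcH _ hkn f hg] at hdet
    have hdiag := diag_index_mem_Icc_of_strictMono hkn hf
    have hmatch := exists_add_eq_of_jacobiTrudiDet_eq
      (fun i j hij => by have : (f i : ℕ) < f j := hf hij; omega)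
      (fun j => ⟨by linarith [(hdiag j).1], by linarith [(hdiag j).2]⟩) hdet
    obtain ⟨i, j, hfirst⟩ := hmatch ⟨0, by omega⟩
    obtain ⟨i', j', hlast⟩ := hmatch ⟨k - 1, by omega⟩
    have := hdiag j
    have := hdiag j'
    have := i'.isLt
    simp only at hfirst hlast
    omega
  · rintro ⟨hfirst, hlast⟩
    have hbound : ∀ i : Fin k, k ≤ lam i ∧ lam i ≤ n - k + 1 := fun i => by
      have := hlam (show ⟨0, by omega⟩ ≤ i from Nat.zero_le _)
      have := hlam (show i ≤ ⟨k - 1, by omega⟩ from Nat.le_sub_one_of_lt i.isLt)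
      omega
    refine ⟨fun i => ⟨n - k + 1 - (lam i - i), by have := hbound i; omega⟩, id,
      fun i j hij => ?_, strictMono_id, ?_⟩
    · have := hlam hij.le
      have := hbound j
      rw [Fin.lt_def] at hij ⊢
      dsimp only
      omega
    · rw [skewSchur_zero_eq_jacobiTrudiDet, det_submatrix_AcH _ hkn _ strictMono_id]
      congr 1
      funext i
      dsimp only
      have := hbound i
      have := i.isLt
      omega
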